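/- For every 0 ≤ i ≤ n, the arc τβ_i is not preprojective, and the arc τ^{−1}γ_i is not preinjective (so neither is an admissible arc of P_{g,h}). -/
import Mathlib


/-- Shift the first entry of every point of `A` by `d` (well defined on arcs, since it
commutes with the deck transformations). -/
def shiftFst (d : ℤ) (A : Set (ℤ × ℤ)) : Set (ℤ × ℤ) := (fun p => (p.1 + d, p.2)) '' A

/-- Shift the second entry of every point of `A` by `d` (well defined on arcs). -/
def shiftSnd (d : ℤ) (A : Set (ℤ × ℤ)) : Set (ℤ × ℤ) := (fun p => (p.1, p.2 + d)) '' A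

/-- The bridging arc `π[x_∂, y_∂']` of the annulus `P_{g,h}`, from the outer boundary `∂`
to the inner boundary `∂'`: the orbit of `(x, y) ∈ ℤ × ℤ` under `σ·(x,y) = (x+g, y+h)`. -/
def orbPP (g h x y : ℤ) : Set (ℤ × ℤ) := {q : ℤ × ℤ | ∃ k : ℤ, q = (x + k * g, y + k * h)}

/-- Elementary moves between bridging arcs from `∂` to `∂'`:
`π[x_∂, y_∂'] → π[(x-1)_∂, y_∂']` and `π[x_∂, y_∂'] → π[x_∂, (y+1)_∂']`. -/
def elemPP (A B : Set (ℤ × ℤ)) : Prop := B = shiftFst (-1) A ∨ B = shiftSnd 1 A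

/-- A bridging arc from `∂` to `∂'` is preprojective if it can be reached from
`β_g = π[0_∂, 0_∂']` by a finite (possibly empty) sequence of elementary moves. -/
def IsPreproj (g h : ℤ) (A : Set (ℤ × ℤ)) : Prop :=
  Relation.ReflTransGen elemPP (orbPP g h 0 0) A

/-- The projective arcs: `β_i = π[(i-g)_∂, 0_∂']` for `0 ≤ i ≤ g` and
`β_i = π[0_∂, (i-g)_∂']` for `g < i ≤ n`. -/
def betaArc (g h i : ℤ) : Set (ℤ × ℤ) :=
  if i ≤ g then orbPP g h (i - g) 0 else orbPP g h 0 (i - g)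

/-- The bridging arc `π[j_∂', x_∂]` of the annulus `P_{g,h}`, from the inner boundary `∂'`
to the outer boundary `∂`: the orbit of `(j, x) ∈ ℤ × ℤ` under `σ·(j,x) = (j+h, x+g)`. -/
def orbPI (g h j x : ℤ) : Set (ℤ × ℤ) := {q : ℤ × ℤ | ∃ k : ℤ, q = (j + k * h, x + k * g)}

/-- Elementary moves between bridging arcs from `∂'` to `∂`:
`π[j_∂', x_∂] → π[(j+1)_∂', x_∂]` and `π[j_∂', x_∂] → π[j_∂', (x-1)_∂]`. -/
def elemPI (A B : Set (ℤ × ℤ)) : Prop := B = shiftFst 1 A ∨ B = shiftSnd (-1) A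

/-- The injective arcs: `γ_i = π[(-2)_∂', (i-g+2)_∂]` for `0 ≤ i ≤ g` and
`γ_i = π[(i-g-2)_∂', 2_∂]` for `g < i ≤ n`. -/
def gammaArc (g h i : ℤ) : Set (ℤ × ℤ) :=
  if i ≤ g then orbPI g h (-2) (i - g + 2) else orbPI g h (i - g - 2) 2

/-- A bridging arc from `∂'` to `∂` is preinjective if `γ_0` can be reached from it by a
finite (possibly empty) sequence of elementary moves. -/
def IsPreinj (g h : ℤ) (A : Set (ℤ × ℤ)) : Prop :=
  Relation.ReflTransGen elemPI A (gammaArc g h 0)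

/-- The translation `τ`, acting on bridging arcs from `∂` to `∂'`:
`π[x_∂, y_∂'] ↦ π[(x+1)_∂, (y-1)_∂']`. -/
def tauOutIn (A : Set (ℤ × ℤ)) : Set (ℤ × ℤ) := (fun p => (p.1 + 1, p.2 - 1)) '' A

/-- The inverse translation `τ⁻¹`, acting on bridging arcs from `∂'` to `∂`:
`π[j_∂', x_∂] ↦ π[(j+1)_∂', (x-1)_∂]`. -/
def tauInvInOut (A : Set (ℤ × ℤ)) : Set (ℤ × ℤ) := (fun p => (p.1 + 1, p.2 - 1)) '' A

lemma orb_map (g h x y a b : ℤ) :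
    ((fun p : ℤ × ℤ => (p.1 + a, p.2 + b)) '' orbPP g h x y) = orbPP g h (x + a) (y + b) := by
  ext ⟨u, v⟩
  simp only [Set.mem_image, orbPP, Set.mem_setOf_eq, Prod.exists, Prod.mk.injEq]
  constructor
  · rintro ⟨p, q, ⟨k, hk1, hk2⟩, h1, h2⟩
    exact ⟨k, by omega, by omega⟩
  · rintro ⟨k, hk1, hk2⟩
    exact ⟨x + k * g, y + k * h, ⟨k, rfl, rfl⟩, by omega, by omega⟩

lemma shiftFst_orbPP (g h x y d : ℤ) :
    shiftFst d (orbPP g h x y) = orbPP g h (x + d) y := by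
  have := orb_map g h x y d 0
  simpa [shiftFst] using this

lemma shiftSnd_orbPP (g h x y d : ℤ) :
    shiftSnd d (orbPP g h x y) = orbPP g h x (y + d) := by
  have := orb_map g h x y 0 d
  simpa [shiftSnd] using this

lemma orbPI_eq (g h j x : ℤ) : orbPI g h j x = orbPP h g j x := rfl

lemma preproj_shape (g h : ℤ) (A : Set (ℤ × ℤ)) (hA : IsPreproj g h A) :
    ∃ a b : ℤ, 0 ≤ a ∧ 0 ≤ b ∧ A = orbPP g h (-a) b := by
  induction hA with
  | refl => exact ⟨0, 0, le_refl _, le_refl _, by norm_num⟩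
  | tail _ hbc ih =>
    obtain ⟨a, b, ha, hb, rfl⟩ := ih
    rcases hbc with rfl | rfl
    · refine ⟨a + 1, b, by omega, hb, ?_⟩
      rw [shiftFst_orbPP]; ring_nf
    · refine ⟨a, b + 1, ha, by omega, ?_⟩
      rw [shiftSnd_orbPP]

lemma shiftFst_shiftFst (d e : ℤ) (A : Set (ℤ × ℤ)) :
    shiftFst d (shiftFst e A) = shiftFst (d + e) A := by
  simp only [shiftFst, ← Set.image_comp]
  apply Set.image_congr'
  intro p; simp; ring

lemma shiftSnd_shiftSnd (d e : ℤ) (A : Set (ℤ × ℤ)) :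
    shiftSnd d (shiftSnd e A) = shiftSnd (d + e) A := by
  simp only [shiftSnd, ← Set.image_comp]
  apply Set.image_congr'
  intro p; simp; ring

lemma shiftFst_zero (A : Set (ℤ × ℤ)) : shiftFst 0 A = A := by
  simp [shiftFst]

lemma shiftSnd_zero (A : Set (ℤ × ℤ)) : shiftSnd 0 A = A := by
  simp [shiftSnd]

lemma preinj_shape (g h : ℤ) (hg : 0 ≤ g) (A : Set (ℤ × ℤ)) (hA : IsPreinj g h A) :
    ∃ a b : ℤ, 0 ≤ a ∧ 0 ≤ b ∧ A = orbPI g h (-2 - a) (2 - g + b) := by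
  unfold IsPreinj at hA
  induction hA using Relation.ReflTransGen.head_induction_on with
  | refl =>
    refine ⟨0, 0, le_refl _, le_refl _, ?_⟩
    unfold gammaArc
    rw [if_pos hg]
    ring_nf
  | head hab _ ih =>
    obtain ⟨a, b, ha, hb, hB⟩ := ih
    rcases hab with hB' | hB'
    · refine ⟨a + 1, b, by omega, hb, ?_⟩
      have : shiftFst (-1) _ = shiftFst (-1) _ := congrArg (shiftFst (-1)) hB'
      rw [shiftFst_shiftFst] at this
      norm_num [shiftFst_zero] at this
      rw [← this, hB, orbPI_eq, orbPI_eq, shiftFst_orbPP]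
      ring_nf
    · refine ⟨a, b + 1, ha, by omega, ?_⟩
      have : shiftSnd 1 _ = shiftSnd 1 _ := congrArg (shiftSnd 1) hB'
      rw [shiftSnd_shiftSnd] at this
      norm_num [shiftSnd_zero] at this
      rw [← this, hB, orbPI_eq, orbPI_eq, shiftSnd_orbPP]
      ring_nf

lemma tauOutIn_orbPP (g h x y : ℤ) :
    tauOutIn (orbPP g h x y) = orbPP g h (x + 1) (y - 1) := by
  have := orb_map g h x y 1 (-1)
  simpa [tauOutIn, sub_eq_add_neg] using this

lemma tauInvInOut_orbPI (g h j x : ℤ) :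
    tauInvInOut (orbPI g h j x) = orbPI g h (j + 1) (x - 1) := by
  have := orb_map h g j x 1 (-1)
  simpa [tauInvInOut, orbPI_eq, sub_eq_add_neg] using this

lemma mem_orbPP_self (g h x y : ℤ) : (x, y) ∈ orbPP g h x y :=
  ⟨0, by simp⟩

/-- for every `0 ≤ i ≤ n`, the arc `τ β_i` is not preprojective and the arc
`τ⁻¹ γ_i` is not preinjective (so neither is an admissible arc of `P_{g,h}`). -/
theorem tau_beta_not_admissible (g h n : ℤ) (hh : 1 ≤ h) (hgh : h ≤ g)
    (hn : n = g + h - 1) :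
    ∀ i : ℤ, 0 ≤ i → i ≤ n →
      ¬ IsPreproj g h (tauOutIn (betaArc g h i)) ∧
      ¬ IsPreinj g h (tauInvInOut (gammaArc g h i)) := by
  intro i hi0 hin
  constructor
  · intro hpp
    obtain ⟨a, b, ha, hb, hA⟩ := preproj_shape g h _ hpp
    by_cases hig : i ≤ g
    · rw [betaArc, if_pos hig, tauOutIn_orbPP] at hA
      have hmem : ((-a : ℤ), b) ∈ orbPP g h (i - g + 1) (0 - 1) := by
        rw [hA]; exact mem_orbPP_self g h (-a) b
      obtain ⟨k, hk⟩ := hmem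
      rw [Prod.mk.injEq] at hk
      obtain ⟨h1, h2⟩ := hk
      have hk1 : 1 ≤ k := by
        by_contra hle
        push_neg at hle
        have hk0 : k ≤ 0 := by omega
        nlinarith [mul_nonpos_of_nonpos_of_nonneg hk0 (show (0:ℤ) ≤ h by linarith)]
      nlinarith [mul_le_mul_of_nonneg_right hk1 (show (0:ℤ) ≤ g by linarith)]
    · rw [betaArc, if_neg hig, tauOutIn_orbPP] at hA
      have hmem : ((-a : ℤ), b) ∈ orbPP g h (0 + 1) (i - g - 1) := by
        rw [hA]; exact mem_orbPP_self g h (-a) b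
      obtain ⟨k, hk⟩ := hmem
      rw [Prod.mk.injEq] at hk
      obtain ⟨h1, h2⟩ := hk
      have hk1 : k ≤ -1 := by
        by_contra hle
        push_neg at hle
        have hk0 : 0 ≤ k := by omega
        nlinarith [mul_nonneg hk0 (show (0:ℤ) ≤ g by linarith)]
      nlinarith [mul_le_mul_of_nonneg_right (show k ≤ -1 from hk1)
        (show (0:ℤ) ≤ h by linarith)]
  · intro hpi
    obtain ⟨a, b, ha, hb, hA⟩ := preinj_shape g h (by linarith) _ hpi
    by_cases hig : i ≤ g
    · rw [gammaArc, if_pos hig, tauInvInOut_orbPI] at hA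
      have hmem : ((-2 - a : ℤ), 2 - g + b) ∈ orbPI g h (-2 + 1) (i - g + 2 - 1) := by
        rw [hA, orbPI_eq]; exact mem_orbPP_self h g (-2 - a) (2 - g + b)
      obtain ⟨k, hk⟩ := hmem
      rw [Prod.mk.injEq] at hk
      obtain ⟨h1, h2⟩ := hk
      have hk1 : k ≤ -1 := by
        by_contra hle
        push_neg at hle
        have hk0 : 0 ≤ k := by omega
        nlinarith [mul_nonneg hk0 (show (0:ℤ) ≤ h by linarith)]
      nlinarith [mul_le_mul_of_nonneg_right (show k ≤ -1 from hk1)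
        (show (0:ℤ) ≤ g by linarith)]
    · rw [gammaArc, if_neg hig, tauInvInOut_orbPI] at hA
      have hmem : ((-2 - a : ℤ), 2 - g + b) ∈ orbPI g h (i - g - 2 + 1) (2 - 1) := by
        rw [hA, orbPI_eq]; exact mem_orbPP_self h g (-2 - a) (2 - g + b)
      obtain ⟨k, hk⟩ := hmem
      rw [Prod.mk.injEq] at hk
      obtain ⟨h1, h2⟩ := hk
      have hk1 : 0 ≤ k := by
        by_contra hle
        push_neg at hle
        have hk0 : k ≤ -1 := by omega
        nlinarith [mul_le_mul_of_nonneg_right hk0 (show (0:ℤ) ≤ g by linarith)]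
      nlinarith [mul_nonneg hk1 (show (0:ℤ) ≤ h by linarith)]
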